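/- Let p be prime, n a positive integer, and R2 = Z_p[u]/(u^2). Suppose C = <g(x) + u·p(x)> is a cyclic code of length n over R2 where g(x) ∈ Z_p[x] is monic of degree r, deg p(x) < r, and g(x) + u·p(x) divides x^n - 1 in R2[x]. Then C is a free R2-module of rank n - r with basis {x^i·(g(x) + u·p(x)) : 0 ≤ i ≤ n - r - 1}, and |C| = p^{2(n-r)}. -/

import Mathlib

open Polynomial

noncomputable section

/-- `Ru p k` is the ring `R_k = Z_p[u]/(u^k)`. -/
abbrev Ru (p k : ℕ) : Type := Polynomial (ZMod p) ⧸ Ideal.span {(X : Polynomial (ZMod p)) ^ k}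

/-- The element `u` of `Ru p k`. -/
abbrev uR (p k : ℕ) : Ru p k := Ideal.Quotient.mk _ (X : Polynomial (ZMod p))

instance (p k n : ℕ) : (Ideal.span {(X : Polynomial (Ru p k)) ^ n - 1}).IsTwoSided :=
  Ideal.instIsTwoSided_1 (α := Polynomial (Ru p k)) _

/-- `Rn p k n` is the ring `R_k[x]/(x^n - 1)`; its ideals are the cyclic codes of length `n`. -/
abbrev Rn (p k n : ℕ) : Type :=
  Polynomial (Ru p k) ⧸ Ideal.span {(X : Polynomial (Ru p k)) ^ n - 1}

/-- The natural ring map `Z_p[x] → R_k[x]/(x^n - 1)`. -/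
abbrev liftP (p k n : ℕ) : Polynomial (ZMod p) →+* Rn p k n :=
  (Ideal.Quotient.mk _).comp (mapRingHom (algebraMap (ZMod p) (Ru p k)))

/-- `u` as an element of `R_k[x]/(x^n - 1)`. -/
abbrev uu (p k n : ℕ) : Rn p k n := Ideal.Quotient.mk _ (C (uR p k))

/-- `x` as an element of `R_k[x]/(x^n - 1)`. -/
abbrev xx (p k n : ℕ) : Rn p k n := Ideal.Quotient.mk _ (X : Polynomial (Ru p k))

/-!
Write `G = g + u p`. As `deg p < deg g`, `G` is monic of degree `r`, hence a non-zero-divisor,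
and `x^n - 1 = G K` with `K` monic of degree `n - r`. Multiplication by `G` therefore induces an
isomorphism `R₂[x]/(K) ≅ (G)/(x^n - 1) = C`, which carries the power basis
`1, x, …, x^(n-r-1)` of `R₂[x]/(K)` to `x^i G`. Counting, `|C| = |R₂|^(n-r) = p^(2(n-r))`.
-/
namespace Ideal.Quotient

variable {R A : Type*} [CommRing R] [CommRing A] [Algebra R A] {c G K : A}

theorem mk_mul_eq_zero_iff_dvd (hG : IsLeftRegular G) (hc : c = G * K) (f : A) :
    mk (span {c}) (f * G) = 0 ↔ K ∣ f := by
  rw [eq_zero_iff_mem, mem_span_singleton, hc, mul_comm f, hG.dvd_cancel_left]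

variable (R c G) in
def mkMulRight :
    A →ₗ[R] (span {mk (span {c}) G}).restrictScalars R where
  toFun f := ⟨mk _ (f * G), mem_span_singleton'.mpr ⟨mk _ f, (map_mul _ _ _).symm⟩⟩
  map_add' f g := by ext; simp [add_mul]
  map_smul' a f := by ext; simp [Algebra.smul_def, mul_assoc]

theorem mkMulRight_surjective : Function.Surjective (mkMulRight R c G) := by
  rintro ⟨z, hz⟩
  obtain ⟨a, rfl⟩ := mem_span_singleton'.mp hz
  obtain ⟨f, rfl⟩ := mk_surjective a
  exact ⟨f, rfl⟩

theorem ker_mkMulRight (hG : IsLeftRegular G) (hc : c = G * K) :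
    LinearMap.ker (mkMulRight R c G) = (span {K}).restrictScalars R := by
  ext f
  rw [LinearMap.mem_ker, Submodule.restrictScalars_mem, mem_span_singleton,
    ← mk_mul_eq_zero_iff_dvd hG hc, Subtype.ext_iff]
  rfl

variable (R) in
def quotSpanEquivSpanMk (hG : IsLeftRegular G) (hc : c = G * K) :
    (A ⧸ span {K}) ≃ₗ[R] (span {mk (span {c}) G}).restrictScalars R :=
  (Submodule.Quotient.restrictScalarsEquiv R (span {K})).symm ≪≫ₗ
    Submodule.quotEquivOfEq _ _ (ker_mkMulRight hG hc).symm ≪≫ₗ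
    (mkMulRight R c G).quotKerEquivOfSurjective mkMulRight_surjective

theorem quotSpanEquivSpanMk_mk (hG : IsLeftRegular G) (hc : c = G * K) (f : A) :
    (quotSpanEquivSpanMk R hG hc (mk _ f) : A ⧸ span {c}) = mk _ (f * G) :=
  rfl

end Ideal.Quotient

theorem Module.Basis.natCard_eq {R M ι : Type*} [Semiring R] [AddCommMonoid M] [Module R M]
    [Fintype ι] (b : Module.Basis ι R M) : Nat.card M = Nat.card R ^ Fintype.card ι := by
  rw [Nat.card_congr b.equivFun.toEquiv, Nat.card_fun, Nat.card_eq_fintype_card (α := ι)]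

open Ideal Ideal.Quotient in
theorem exists_basis_span_mk_X_pow_mul {R : Type*} [CommRing R] {c G K : R[X]} {m : ℕ}
    (hG : G.Monic) (hK : K.Monic) (hKdeg : K.natDegree = m) (hc : c = G * K) :
    ∃ b : Module.Basis (Fin m) R ((span {mk (span {c}) G}).restrictScalars R),
      ∀ i, (b i : R[X] ⧸ span {c}) = mk _ X ^ (i : ℕ) * mk _ G := by
  let e : AdjoinRoot K ≃ₗ[R] _ := quotSpanEquivSpanMk R hG.isRegular.left hc
  let pb := AdjoinRoot.powerBasis' hK
  refine ⟨(pb.basis.map e).reindex (finCongr hKdeg), fun i => ?_⟩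
  rw [Module.Basis.reindex_apply, Module.Basis.map_apply, PowerBasis.basis_eq_pow,
    AdjoinRoot.powerBasis'_gen, ← AdjoinRoot.mk_X, ← map_pow]
  exact (quotSpanEquivSpanMk_mk _ _ _).trans (by rw [map_mul, map_pow]; rfl)

theorem Polynomial.Monic.map_add_C_mul_map {R S : Type*} [Semiring R] [Semiring S] [Nontrivial S]
    (f : R →+* S) {g q : R[X]} (hg : g.Monic) (hq : q.degree < g.degree) (a : S) :
    (g.map f + C a * q.map f).Monic ∧ (g.map f + C a * q.map f).natDegree = g.natDegree := by
  have hlt : (C a * q.map f).degree < (g.map f).degree := by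
    rw [← smul_eq_C_mul, hg.degree_map f]
    exact (degree_smul_le a _).trans_lt (degree_map_le.trans_lt hq)
  exact ⟨(hg.map f).add_of_left hlt, by
    rw [natDegree_add_eq_left_of_degree_lt hlt, hg.natDegree_map f]⟩

theorem natCard_Ru (p k : ℕ) [Fact (1 < p)] : Nat.card (Ru p k) = p ^ k := by
  have := (AdjoinRoot.powerBasis' (monic_X_pow (R := ZMod p) k)).basis.natCard_eq
  rwa [Fintype.card_fin, AdjoinRoot.powerBasis'_dim, natDegree_X_pow, Nat.card_zmod] at this

/-- Over `R_2 = Z_p[u]/(u^2)`, if `C = <g(x) + u p(x)>` with `g` monic of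
degree `r`, `deg p < deg g`, and `g(x) + u p(x) ∣ x^n - 1` in `R_2[x]`, then `C` is a free
`R_2`-module of rank `n - r` with basis `{x^i (g(x) + u p(x)) : 0 ≤ i ≤ n - r - 1}`, and
`|C| = p^{2(n-r)}`. -/
theorem stmt4 (p n r : ℕ) (hp : p.Prime) (hn : 0 < n)
    (g pp : Polynomial (ZMod p)) (Ck : Ideal (Rn p 2 n))
    (hmon : g.Monic) (hdeg : g.natDegree = r) (hppdeg : pp.degree < g.degree)
    (hdvd : (g.map (algebraMap (ZMod p) (Ru p 2)) +
        C (uR p 2) * pp.map (algebraMap (ZMod p) (Ru p 2))) ∣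
        ((X : Polynomial (Ru p 2)) ^ n - 1))
    (hC : Ck = Ideal.span {liftP p 2 n g + uu p 2 n * liftP p 2 n pp}) :
    (∃ b : Module.Basis (Fin (n - r)) (Ru p 2) (Ck.restrictScalars (Ru p 2)),
      ∀ i : Fin (n - r), (b i : Rn p 2 n) =
        xx p 2 n ^ (i : ℕ) * (liftP p 2 n g + uu p 2 n * liftP p 2 n pp)) ∧
      Nat.card Ck = p ^ (2 * (n - r)) := by
  have := Fact.mk hp
  have : Nontrivial (Ru p 2) := AdjoinRoot.nontrivial _ (by simp)
  set G := g.map (algebraMap (ZMod p) (Ru p 2)) + C (uR p 2) * pp.map (algebraMap (ZMod p) (Ru p 2))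
  obtain ⟨hGmon, hGdeg⟩ := hmon.map_add_C_mul_map (algebraMap _ _) hppdeg (uR p 2)
  obtain ⟨K, hK⟩ := hdvd
  have hXn : ((X : (Ru p 2)[X]) ^ n - 1).Monic := by
    simpa using monic_X_pow_sub_C (1 : Ru p 2) hn.ne'
  have hKmon : K.Monic := hGmon.of_mul_monic_left (hK ▸ hXn)
  have hKdeg : K.natDegree = n - r := by
    have := hGmon.natDegree_mul hKmon
    rw [← hK, ← C_1, natDegree_X_pow_sub_C] at this
    omega
  obtain ⟨b, hb⟩ := exists_basis_span_mk_X_pow_mul hGmon hKmon hKdeg hK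
  have hgen : liftP p 2 n g + uu p 2 n * liftP p 2 n pp = Ideal.Quotient.mk _ G := rfl
  rw [hC, hgen]
  refine ⟨⟨b, hb⟩, b.natCard_eq.trans ?_⟩
  rw [natCard_Ru, Fintype.card_fin, ← pow_mul]
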